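/- arXiv:2605.26491 — 2 statements merged into one kernel-verified Lean document; each statement's English description precedes it below -/
import Mathlib

section
/- Let μ be a probability measure on a measurable space X, let f : X → ℝ be measurable, and let a, b : ℝ satisfy a ≤ f x ≤ b for μ-almost every x. Let μ_f denote the exponentially tilted measure with μ-density exp(f x) / (∫ y, exp (f y) ∂μ). Then the Kullback–Leibler divergence of μ_f from μ satisfies KL(μ_f ‖ μ) ≤ b - a. -/
open MeasureTheory Real
open scoped ENNReal Classical

/-- The Kullback–Leibler divergence `KL(ν ‖ μ) = ∫ log (dν/dμ) dν` when `ν ≪ μ` and the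
log-likelihood ratio is integrable, and `∞` otherwise; it takes values in `[0, ∞]`. -/
noncomputable def klDiv {X : Type*} [MeasurableSpace X] (ν μ : Measure X) : ℝ≥0∞ :=
  if ν ≪ μ ∧ Integrable (MeasureTheory.llr ν μ) ν then
    ENNReal.ofReal (∫ x, MeasureTheory.llr ν μ x ∂ν)
  else ⊤

/-- If `f` is μ-a.e. bounded between `a` and `b` for a probability measure `μ`, then the KL
divergence of the exponentially tilted measure `μ_f` from `μ` is at most `b - a`. -/
theorem klDiv_tilted_le {X : Type*} [MeasurableSpace X]
    (μ : Measure X) [IsProbabilityMeasure μ]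
    (f : X → ℝ) (hf : Measurable f) (a b : ℝ)
    (hab : ∀ᵐ x ∂μ, a ≤ f x ∧ f x ≤ b) :
    klDiv (μ.tilted f) μ ≤ ENNReal.ofReal (b - a) := by
  have hexp : Integrable (fun x ↦ exp (f x)) μ := by
    refine Integrable.mono' (integrable_const (exp b)) (hf.exp.aestronglyMeasurable) ?_
    filter_upwards [hab] with x hx
    rw [Real.norm_eq_abs, abs_of_pos (exp_pos _)]
    exact exp_le_exp.2 hx.2
  have hZpos : 0 < ∫ x, exp (f x) ∂μ := integral_exp_pos hexp
  have hZa : a ≤ log (∫ x, exp (f x) ∂μ) := by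
    rw [Real.le_log_iff_exp_le hZpos]
    calc exp a = ∫ _, exp a ∂μ := by simp
    _ ≤ ∫ x, exp (f x) ∂μ := by
        refine integral_mono_ae (integrable_const _) hexp ?_
        filter_upwards [hab] with x hx using exp_le_exp.2 hx.1
  have hac : μ.tilted f ≪ μ := tilted_absolutelyContinuous μ f
  have h_eq : llr (μ.tilted f) μ =ᵐ[μ] fun x ↦ f x - log (∫ x, exp (f x) ∂μ) :=
    log_rnDeriv_tilted_left_self hexp
  have h_eq' : llr (μ.tilted f) μ =ᵐ[μ.tilted f] fun x ↦ f x - log (∫ x, exp (f x) ∂μ) :=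
    hac.ae_le h_eq
  have hab' : ∀ᵐ x ∂(μ.tilted f), a ≤ f x ∧ f x ≤ b := hac.ae_le hab
  have : IsProbabilityMeasure (μ.tilted f) := isProbabilityMeasure_tilted hexp
  have h_int : Integrable (llr (μ.tilted f) μ) (μ.tilted f) := by
    rw [integrable_congr h_eq']
    refine Integrable.mono' (integrable_const (|a| + |b| + |log (∫ x, exp (f x) ∂μ)|))
      ((hf.sub measurable_const).aestronglyMeasurable) ?_
    filter_upwards [hab'] with x hx
    have h1 : |f x| ≤ |a| + |b| :=
      abs_le.2 ⟨by linarith [neg_abs_le a, abs_nonneg b, hx.1],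
        by linarith [le_abs_self b, abs_nonneg a, hx.2]⟩
    calc ‖f x - log (∫ x, exp (f x) ∂μ)‖ ≤ |f x| + |log (∫ x, exp (f x) ∂μ)| :=
          norm_sub_le _ _
    _ ≤ |a| + |b| + |log (∫ x, exp (f x) ∂μ)| := by linarith
  rw [klDiv, if_pos ⟨hac, h_int⟩]
  refine ENNReal.ofReal_le_ofReal ?_
  calc ∫ x, llr (μ.tilted f) μ x ∂(μ.tilted f)
      = ∫ x, f x - log (∫ x, exp (f x) ∂μ) ∂(μ.tilted f) := integral_congr_ae h_eq'
    _ ≤ ∫ _, b - a ∂(μ.tilted f) := by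
        refine integral_mono_ae ((integrable_congr h_eq').mp h_int) (integrable_const _) ?_
        filter_upwards [hab'] with x hx
        linarith [hx.2]
    _ = b - a := by simp
end

section
/- Let μ be a probability measure on a measurable space X, let S : X → ℝ be measurable, let η > 0, and suppose there exist a, b : ℝ with a ≤ S x ≤ b for μ-almost every x and b - a ≤ Δ for some Δ ≥ 0. Let ν denote the exponentially tilted measure with μ-density exp(S x / η) / (∫ y, exp (S y / η) ∂μ). Then KL(ν ‖ μ) ≤ Δ / η. In particular, if Δ = N / (2 * λ) for a positive natural number N and λ > 0, then KL(ν ‖ μ) ≤ N / (2 * λ * η). -/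
open MeasureTheory Real
open scoped ENNReal Classical

/-- Surrogate KL bound: if the implicit reward `S` is μ-a.e. bounded with range at most `Δ`,
then the tilted distribution `ν` with μ-density proportional to `exp (S x / η)` satisfies
`KL(ν ‖ μ) ≤ Δ / η`; in particular, for `Δ = N / (2λ)` we get `KL(ν ‖ μ) ≤ N / (2λη)`. -/
theorem surrogate_kl_bound {X : Type*} [MeasurableSpace X]
    (μ : Measure X) [IsProbabilityMeasure μ]
    (S : X → ℝ) (hS : Measurable S) (η : ℝ) (hη : 0 < η)
    (a b Δ : ℝ) (hΔ : 0 ≤ Δ)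
    (hab : ∀ᵐ x ∂μ, a ≤ S x ∧ S x ≤ b) (hrange : b - a ≤ Δ)
    (ν : Measure X) (hν : ν = μ.tilted (fun x => S x / η)) :
    klDiv ν μ ≤ ENNReal.ofReal (Δ / η) ∧
      ∀ (N : ℕ), 0 < N → ∀ lam : ℝ, 0 < lam → Δ = (N : ℝ) / (2 * lam) →
        klDiv ν μ ≤ ENNReal.ofReal ((N : ℝ) / (2 * lam * η)) := by
  set f : X → ℝ := fun x => S x / η with hf_def
  have hf_meas : Measurable f := hS.div_const η
  have hfab : ∀ᵐ x ∂μ, a / η ≤ f x ∧ f x ≤ b / η := by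
    filter_upwards [hab] with x ⟨h1, h2⟩
    exact ⟨div_le_div_of_nonneg_right h1 hη.le, div_le_div_of_nonneg_right h2 hη.le⟩
  have hf_int : Integrable (fun x => exp (f x)) μ := by
    refine Integrable.mono' (integrable_const (exp (b / η)))
      (hf_meas.exp.aestronglyMeasurable) ?_
    filter_upwards [hfab] with x ⟨_, h2⟩
    rw [Real.norm_eq_abs, abs_of_pos (exp_pos _)]
    exact exp_le_exp.mpr h2
  have hνμ : ν ≪ μ := hν ▸ tilted_absolutelyContinuous μ f
  have hZ_ge : a / η ≤ log (∫ x, exp (f x) ∂μ) := by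
    have h1 : exp (a / η) ≤ ∫ x, exp (f x) ∂μ := by
      calc exp (a / η) = ∫ _, exp (a / η) ∂μ := by simp
        _ ≤ ∫ x, exp (f x) ∂μ := by
            refine integral_mono_ae (integrable_const _) hf_int ?_
            filter_upwards [hfab] with x ⟨h1, _⟩ using exp_le_exp.mpr h1
    calc a / η = log (exp (a / η)) := (log_exp _).symm
      _ ≤ log (∫ x, exp (f x) ∂μ) := Real.log_le_log (exp_pos _) h1
  -- llr characterization
  have h_llr : MeasureTheory.llr ν μ =ᵐ[ν] fun x => f x - log (∫ z, exp (f z) ∂μ) := by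
    have h1 : MeasureTheory.llr (μ.tilted f) μ =ᵐ[μ]
        fun x => f x - log (∫ z, exp (f z) ∂μ) + MeasureTheory.llr μ μ x :=
      llr_tilted_left Measure.AbsolutelyContinuous.rfl hf_int hf_meas.aemeasurable
    have h2 : MeasureTheory.llr μ μ =ᵐ[μ] fun _ => (0 : ℝ) := by
      filter_upwards [μ.rnDeriv_self] with x hx
      simp [MeasureTheory.llr, hx]
    have h3 : MeasureTheory.llr ν μ =ᵐ[μ]
        fun x => f x - log (∫ z, exp (f z) ∂μ) := by
      rw [hν]
      filter_upwards [h1, h2] with x hx1 hx2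
      simp [hx1, hx2]
    exact hνμ.ae_le h3
  have h_bound : ∀ᵐ x ∂ν, MeasureTheory.llr ν μ x ≤ Δ / η := by
    filter_upwards [h_llr, hνμ.ae_le hfab] with x hx ⟨_, h2⟩
    rw [hx]
    have : f x - log (∫ z, exp (f z) ∂μ) ≤ b / η - a / η := sub_le_sub h2 hZ_ge
    calc f x - log (∫ z, exp (f z) ∂μ) ≤ b / η - a / η := this
      _ = (b - a) / η := (sub_div _ _ _).symm
      _ ≤ Δ / η := div_le_div_of_nonneg_right hrange hη.le
  have hν_prob : IsProbabilityMeasure ν := hν ▸ isProbabilityMeasure_tilted hf_int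
  have h_abs : ∀ᵐ x ∂ν, |MeasureTheory.llr ν μ x| ≤ |a / η| + |b / η| + |log (∫ z, exp (f z) ∂μ)| := by
    filter_upwards [h_llr, hνμ.ae_le hfab] with x hx ⟨h1, h2⟩
    rw [hx]
    have habs : |f x| ≤ |a / η| + |b / η| := abs_le.mpr
      ⟨by linarith [neg_abs_le (a/η), abs_nonneg (b/η)],
       by linarith [le_abs_self (b/η), abs_nonneg (a/η)]⟩
    calc |f x - log (∫ z, exp (f z) ∂μ)| ≤ |f x| + |log (∫ z, exp (f z) ∂μ)| := abs_sub _ _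
      _ ≤ |a / η| + |b / η| + |log (∫ z, exp (f z) ∂μ)| := by linarith
  have h_int : Integrable (MeasureTheory.llr ν μ) ν := by
    refine Integrable.mono' (integrable_const _) ?_ h_abs
    exact (Measurable.stronglyMeasurable (measurable_llr ν μ)).aestronglyMeasurable
  have h_main : klDiv ν μ ≤ ENNReal.ofReal (Δ / η) := by
    rw [klDiv, if_pos ⟨hνμ, h_int⟩]
    refine ENNReal.ofReal_le_ofReal ?_
    calc ∫ x, MeasureTheory.llr ν μ x ∂ν ≤ ∫ _, Δ / η ∂ν :=
          integral_mono_ae h_int (integrable_const _) h_bound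
      _ = Δ / η := by simp
  refine ⟨h_main, fun N hN lam hlam hΔeq => ?_⟩
  have : Δ / η = (N : ℝ) / (2 * lam * η) := by
    rw [hΔeq]; field_simp
  rw [← this]
  exact h_main
end
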